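/- Let Q, Q₀ : ℝ^s → ℝ be functions that agree on the ball {y : |y| < δ} for some δ > 0, and such that R = Q - Q₀ satisfies a polynomial bound |R(y)| ≤ Σ_j a_j |y|^j for |y| ≥ δ. Define I(ε) = ε^{-s/2} ∫ Q(y) e^{-|y|²/(2ε)} dy and I₀(ε) = ε^{-s/2} ∫ Q₀(y) e^{-|y|²/(2ε)} dy. Then there is c > 0 with |I(ε) - I₀(ε)| = o(ε^{-s/2} e^{-c/ε}) as ε → 0⁺. -/
import Mathlib


open MeasureTheory Real Filter Asymptotics Topology

lemma aux_pow_mul_gauss_le (j : ℕ) (t : ℝ) (ht : 0 ≤ t) :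
    t ^ j * Real.exp (-t ^ 2 / 4) ≤ j.factorial * Real.exp 2 * Real.exp (-t ^ 2 / 8) := by
  have h1 : t ^ j ≤ j.factorial * Real.exp t := by
    have h := Real.pow_div_factorial_le_exp t ht j
    rw [div_le_iff₀ (by positivity)] at h
    linarith
  calc t ^ j * Real.exp (-t ^ 2 / 4)
      ≤ (j.factorial * Real.exp t) * Real.exp (-t ^ 2 / 4) :=
        mul_le_mul_of_nonneg_right h1 (Real.exp_pos _).le
    _ = j.factorial * Real.exp (t + -t ^ 2 / 4) := by rw [Real.exp_add]; ring
    _ ≤ j.factorial * Real.exp (2 + -t ^ 2 / 8) := by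
        have h2 : t + -t ^ 2 / 4 ≤ 2 + -t ^ 2 / 8 := by nlinarith [sq_nonneg (t - 4)]
        exact mul_le_mul_of_nonneg_left (Real.exp_le_exp.2 h2) (by positivity)
    _ = j.factorial * Real.exp 2 * Real.exp (-t ^ 2 / 8) := by rw [Real.exp_add]; ring

lemma aux_gauss_integrable (s : ℕ) :
    Integrable (fun y : EuclideanSpace ℝ (Fin s) => Real.exp (-‖y‖ ^ 2 / 8)) := by
  have h := (GaussianFourier.integrable_cexp_neg_mul_sq_norm_add
    (V := EuclideanSpace ℝ (Fin s)) (b := (1/8 : ℂ)) (by norm_num) 0 0).norm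
  refine h.congr (Filter.Eventually.of_forall fun y => ?_)
  simp only [zero_mul, add_zero]
  have : (-(1/8 : ℂ) * (‖y‖ : ℂ) ^ 2) = ((-‖y‖ ^ 2 / 8 : ℝ) : ℂ) := by push_cast; ring
  rw [this, ← Complex.ofReal_exp, Complex.norm_real, Real.norm_eq_abs,
    abs_of_pos (Real.exp_pos _)]


/-- If `Q, Q₀ : ℝ^s → ℝ` agree on the ball of radius `δ > 0` and `R = Q - Q₀`
has polynomial growth for `‖y‖ ≥ δ`, then with
`I(ε) = ε^{-s/2} ∫ Q(y) e^{-‖y‖²/(2ε)} dy` and similarly `I₀(ε)`, one has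
`|I(ε) - I₀(ε)| = o(ε^{-s/2} e^{-c/ε})` as `ε → 0⁺` for some `c > 0`. -/
theorem gaussian_integral_polynomial_asymptotics
    (s : ℕ) (Q Q₀ : EuclideanSpace ℝ (Fin s) → ℝ)
    (hQm : Measurable Q) (hQ₀m : Measurable Q₀)
    (δ : ℝ) (hδ : 0 < δ) (N : ℕ) (a : ℕ → ℝ)
    (hagree : ∀ y, ‖y‖ < δ → Q y = Q₀ y)
    (hgrowth : ∀ y, δ ≤ ‖y‖ → |Q y - Q₀ y| ≤ ∑ j ∈ Finset.range (N + 1), a j * ‖y‖ ^ j)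
    (hint : ∀ ε : ℝ, 0 < ε → Integrable (fun y => Q₀ y * Real.exp (-‖y‖ ^ 2 / (2 * ε)))) :
    ∃ c > 0,
      (fun ε : ℝ =>
          ε ^ (-(s : ℝ) / 2) * (∫ y, Q y * Real.exp (-‖y‖ ^ 2 / (2 * ε))) -
            ε ^ (-(s : ℝ) / 2) * ∫ y, Q₀ y * Real.exp (-‖y‖ ^ 2 / (2 * ε)))
        =o[𝓝[>] (0 : ℝ)] fun ε : ℝ => ε ^ (-(s : ℝ) / 2) * Real.exp (-c / ε) := by
  refine ⟨δ ^ 2 / 4, by positivity, ?_⟩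
  set A : ℝ := ∑ j ∈ Finset.range (N + 1), |a j| * j.factorial * Real.exp 2 with hA
  have hA0 : 0 ≤ A := Finset.sum_nonneg fun j _ => by positivity
  have hgauss := aux_gauss_integrable s
  set CI : ℝ := ∫ y : EuclideanSpace ℝ (Fin s), Real.exp (-‖y‖ ^ 2 / 8) with hCI
  have hCI0 : 0 ≤ CI := integral_nonneg fun y => (Real.exp_pos _).le
  -- pointwise bound
  have hpt : ∀ ε : ℝ, 0 < ε → ε ≤ 1 → ∀ y : EuclideanSpace ℝ (Fin s),
      |(Q y - Q₀ y) * Real.exp (-‖y‖ ^ 2 / (2 * ε))| ≤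
        Real.exp (δ ^ 2 / 4 - δ ^ 2 / (2 * ε)) * (A * Real.exp (-‖y‖ ^ 2 / 8)) := by
    intro ε hε hε1 y
    rcases lt_or_ge ‖y‖ δ with hy | hy
    · rw [hagree y hy, sub_self, zero_mul, abs_zero]
      exact mul_nonneg (Real.exp_pos _).le (mul_nonneg hA0 (Real.exp_pos _).le)
    · have hy2 : δ ^ 2 ≤ ‖y‖ ^ 2 := by nlinarith [norm_nonneg y]
      have habs : |(Q y - Q₀ y) * Real.exp (-‖y‖ ^ 2 / (2 * ε))| =
          |Q y - Q₀ y| * Real.exp (-‖y‖ ^ 2 / (2 * ε)) := by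
        rw [abs_mul, abs_of_pos (Real.exp_pos _)]
      rw [habs]
      have h1 : |Q y - Q₀ y| ≤ ∑ j ∈ Finset.range (N + 1), |a j| * ‖y‖ ^ j := by
        refine (hgrowth y hy).trans (Finset.sum_le_sum fun j _ => ?_)
        exact mul_le_mul_of_nonneg_right (le_abs_self _) (by positivity)
      have hfac : (1 : ℝ) / 4 ≤ 1 / (2 * ε) := by
        rw [div_le_div_iff₀ (by norm_num) (by positivity)]
        nlinarith
      have h2 : Real.exp (-‖y‖ ^ 2 / (2 * ε)) ≤
          Real.exp (δ ^ 2 / 4 - δ ^ 2 / (2 * ε)) * Real.exp (-‖y‖ ^ 2 / 4) := by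
        rw [← Real.exp_add]
        refine Real.exp_le_exp.2 ?_
        have key : (‖y‖ ^ 2 - δ ^ 2) * (1 / 4) ≤ (‖y‖ ^ 2 - δ ^ 2) * (1 / (2 * ε)) :=
          mul_le_mul_of_nonneg_left hfac (by linarith)
        have e1 : -‖y‖ ^ 2 / (2 * ε) = -(‖y‖ ^ 2 * (1 / (2 * ε))) := by ring
        have e2 : δ ^ 2 / (2 * ε) = δ ^ 2 * (1 / (2 * ε)) := by ring
        rw [e1, e2]
        nlinarith [key]
      calc |Q y - Q₀ y| * Real.exp (-‖y‖ ^ 2 / (2 * ε))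
          ≤ (∑ j ∈ Finset.range (N + 1), |a j| * ‖y‖ ^ j) *
              (Real.exp (δ ^ 2 / 4 - δ ^ 2 / (2 * ε)) * Real.exp (-‖y‖ ^ 2 / 4)) :=
            mul_le_mul h1 h2 (Real.exp_pos _).le
              (Finset.sum_nonneg fun j _ => by positivity)
        _ = Real.exp (δ ^ 2 / 4 - δ ^ 2 / (2 * ε)) *
              ∑ j ∈ Finset.range (N + 1), |a j| * (‖y‖ ^ j * Real.exp (-‖y‖ ^ 2 / 4)) := by
            rw [Finset.sum_mul, Finset.mul_sum]
            exact Finset.sum_congr rfl fun j _ => by ring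
        _ ≤ Real.exp (δ ^ 2 / 4 - δ ^ 2 / (2 * ε)) * (A * Real.exp (-‖y‖ ^ 2 / 8)) := by
            refine mul_le_mul_of_nonneg_left ?_ (Real.exp_pos _).le
            rw [hA, Finset.sum_mul]
            refine Finset.sum_le_sum fun j _ => ?_
            calc |a j| * (‖y‖ ^ j * Real.exp (-‖y‖ ^ 2 / 4))
                ≤ |a j| * (j.factorial * Real.exp 2 * Real.exp (-‖y‖ ^ 2 / 8)) :=
                  mul_le_mul_of_nonneg_left
                    (aux_pow_mul_gauss_le j ‖y‖ (norm_nonneg y)) (abs_nonneg _)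
              _ = |a j| * j.factorial * Real.exp 2 * Real.exp (-‖y‖ ^ 2 / 8) := by ring
  -- integrability of the difference
  have hmeas : ∀ ε : ℝ, Measurable fun y : EuclideanSpace ℝ (Fin s) =>
      (Q y - Q₀ y) * Real.exp (-‖y‖ ^ 2 / (2 * ε)) := by
    intro ε
    exact (hQm.sub hQ₀m).mul
      (Real.measurable_exp.comp (((measurable_norm.pow_const 2).neg).div_const _))
  have hRint : ∀ ε : ℝ, 0 < ε → ε ≤ 1 →
      Integrable (fun y => (Q y - Q₀ y) * Real.exp (-‖y‖ ^ 2 / (2 * ε))) := by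
    intro ε hε hε1
    refine Integrable.mono' (((hgauss.const_mul A).const_mul
      (Real.exp (δ ^ 2 / 4 - δ ^ 2 / (2 * ε))))) (hmeas ε).aestronglyMeasurable
      (Filter.Eventually.of_forall fun y => ?_)
    rw [Real.norm_eq_abs]
    exact hpt ε hε hε1 y
  -- splitting the integral
  have hsplit : ∀ ε : ℝ, 0 < ε → ε ≤ 1 →
      (∫ y, Q y * Real.exp (-‖y‖ ^ 2 / (2 * ε))) =
        (∫ y, Q₀ y * Real.exp (-‖y‖ ^ 2 / (2 * ε))) +
          ∫ y, (Q y - Q₀ y) * Real.exp (-‖y‖ ^ 2 / (2 * ε)) := by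
    intro ε hε hε1
    rw [← integral_add (hint ε hε) (hRint ε hε hε1)]
    congr 1; funext y; ring
  -- bound on the remainder integral
  have hbound : ∀ ε : ℝ, 0 < ε → ε ≤ 1 →
      ‖∫ y, (Q y - Q₀ y) * Real.exp (-‖y‖ ^ 2 / (2 * ε))‖ ≤
        Real.exp (δ ^ 2 / 4 - δ ^ 2 / (2 * ε)) * (A * CI) := by
    intro ε hε hε1
    have := norm_integral_le_of_norm_le (((hgauss.const_mul A).const_mul
      (Real.exp (δ ^ 2 / 4 - δ ^ 2 / (2 * ε)))))
      (Filter.Eventually.of_forall fun y => by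
        rw [Real.norm_eq_abs]; exact hpt ε hε hε1 y)
    refine this.trans (le_of_eq ?_)
    rw [integral_const_mul, integral_const_mul]
  -- the little-o statement
  rw [isLittleO_iff]
  intro c0 hc0
  have hev1 : ∀ᶠ ε in 𝓝[>] (0 : ℝ), 0 < ε := eventually_mem_nhdsWithin
  have hev2 : ∀ᶠ ε in 𝓝[>] (0 : ℝ), ε ≤ 1 :=
    Filter.Eventually.filter_mono nhdsWithin_le_nhds (eventually_le_nhds zero_lt_one)
  have htend : Tendsto (fun ε : ℝ => Real.exp (δ ^ 2 / 4) * (A * CI) *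
      Real.exp (-(δ ^ 2 / 4) / ε)) (𝓝[>] (0 : ℝ)) (𝓝 0) := by
    have T1 : Tendsto (fun ε : ℝ => (δ ^ 2 / 4) * ε⁻¹) (𝓝[>] (0 : ℝ)) atTop :=
      Tendsto.const_mul_atTop (by positivity) tendsto_inv_nhdsGT_zero
    have T2 : Tendsto (fun ε : ℝ => -(δ ^ 2 / 4) / ε) (𝓝[>] (0 : ℝ)) atBot := by
      have h := tendsto_neg_atTop_atBot.comp T1
      refine h.congr fun ε => ?_
      simp [Function.comp, neg_div, div_eq_mul_inv]
    have T3 : Tendsto (fun ε : ℝ => Real.exp (-(δ ^ 2 / 4) / ε)) (𝓝[>] (0 : ℝ)) (𝓝 0) :=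
      Real.tendsto_exp_atBot.comp T2
    have := T3.const_mul (Real.exp (δ ^ 2 / 4) * (A * CI))
    simpa using this
  have hev3 : ∀ᶠ ε in 𝓝[>] (0 : ℝ), Real.exp (δ ^ 2 / 4) * (A * CI) *
      Real.exp (-(δ ^ 2 / 4) / ε) < c0 := htend.eventually_lt_const hc0
  filter_upwards [hev1, hev2, hev3] with ε hε hε1 hε3
  have hrp : (0 : ℝ) < ε ^ (-(s : ℝ) / 2) := Real.rpow_pos_of_pos hε _
  have hdiff : ε ^ (-(s : ℝ) / 2) * (∫ y, Q y * Real.exp (-‖y‖ ^ 2 / (2 * ε))) -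
      ε ^ (-(s : ℝ) / 2) * (∫ y, Q₀ y * Real.exp (-‖y‖ ^ 2 / (2 * ε))) =
      ε ^ (-(s : ℝ) / 2) * ∫ y, (Q y - Q₀ y) * Real.exp (-‖y‖ ^ 2 / (2 * ε)) := by
    rw [hsplit ε hε hε1]; ring
  rw [hdiff, norm_mul, norm_mul, Real.norm_eq_abs (ε ^ _), abs_of_pos hrp,
    Real.norm_eq_abs (Real.exp _), abs_of_pos (Real.exp_pos _), ← mul_assoc,
    mul_comm c0 (ε ^ (-(s : ℝ) / 2)), mul_assoc]
  refine mul_le_mul_of_nonneg_left ?_ hrp.le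
  -- remains: ‖∫ R‖ ≤ c0 * exp (-(δ^2/4)/ε)
  have key : Real.exp (δ ^ 2 / 4 - δ ^ 2 / (2 * ε)) * (A * CI) =
      Real.exp (δ ^ 2 / 4) * (A * CI) * Real.exp (-(δ ^ 2 / 4) / ε) *
        Real.exp (-(δ ^ 2 / 4) / ε) := by
    rw [show δ ^ 2 / 4 - δ ^ 2 / (2 * ε) =
      δ ^ 2 / 4 + -(δ ^ 2 / 4) / ε + -(δ ^ 2 / 4) / ε from by field_simp; ring,
      Real.exp_add, Real.exp_add]
    ring
  calc ‖∫ y, (Q y - Q₀ y) * Real.exp (-‖y‖ ^ 2 / (2 * ε))‖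
      ≤ Real.exp (δ ^ 2 / 4 - δ ^ 2 / (2 * ε)) * (A * CI) := hbound ε hε hε1
    _ = Real.exp (δ ^ 2 / 4) * (A * CI) * Real.exp (-(δ ^ 2 / 4) / ε) *
        Real.exp (-(δ ^ 2 / 4) / ε) := key
    _ ≤ c0 * Real.exp (-(δ ^ 2 / 4) / ε) :=
        mul_le_mul_of_nonneg_right hε3.le (Real.exp_pos _).le
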